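/- arXiv:2303.00485 — 5 statements merged into one kernel-verified Lean document; each statement's English description precedes it below -/
import Mathlib

section
/- Let a ≥ 3 be an integer. Then the polynomial f(x) = x^3 + (a-1)x^2 - a x - 1 has three real roots ρ, ρ', ρ'' satisfying 1 + 1/(a+3) < ρ < 1 + 1/(a+2), -1/a < ρ' < -1/(a+1), and -a + 1/(a²+a) < ρ'' < -a + 1/a². -/
open Set

private lemma ennola_aux (b u v : ℝ) (huv : u ≤ v)
    (h1 : u ^ 3 + (b - 1) * u ^ 2 - b * u - 1 < 0)
    (h2 : 0 < v ^ 3 + (b - 1) * v ^ 2 - b * v - 1) :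
    ∃ x, x ^ 3 + (b - 1) * x ^ 2 - b * x - 1 = 0 ∧ u < x ∧ x < v := by
  have hc : ContinuousOn (fun x : ℝ => x ^ 3 + (b - 1) * x ^ 2 - b * x - 1) (Icc u v) := by
    fun_prop
  obtain ⟨x, hx, hfx⟩ := intermediate_value_Ioo huv hc ⟨h1, h2⟩
  exact ⟨x, hfx, hx.1, hx.2⟩

private lemma ennola_aux' (b u v : ℝ) (huv : u ≤ v)
    (h1 : 0 < u ^ 3 + (b - 1) * u ^ 2 - b * u - 1)
    (h2 : v ^ 3 + (b - 1) * v ^ 2 - b * v - 1 < 0) :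
    ∃ x, x ^ 3 + (b - 1) * x ^ 2 - b * x - 1 = 0 ∧ u < x ∧ x < v := by
  have hc : ContinuousOn (fun x : ℝ => x ^ 3 + (b - 1) * x ^ 2 - b * x - 1) (Icc u v) := by
    fun_prop
  obtain ⟨x, hx, hfx⟩ := intermediate_value_Ioo' huv hc ⟨h2, h1⟩
  exact ⟨x, hfx, hx.1, hx.2⟩

theorem ennola_roots (a : ℤ) (ha : 3 ≤ a) :
    ∃ ρ ρ' ρ'' : ℝ,
      (ρ ^ 3 + ((a : ℝ) - 1) * ρ ^ 2 - (a : ℝ) * ρ - 1 = 0 ∧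
        1 + 1 / ((a : ℝ) + 3) < ρ ∧ ρ < 1 + 1 / ((a : ℝ) + 2)) ∧
      (ρ' ^ 3 + ((a : ℝ) - 1) * ρ' ^ 2 - (a : ℝ) * ρ' - 1 = 0 ∧
        -(1 / (a : ℝ)) < ρ' ∧ ρ' < -(1 / ((a : ℝ) + 1))) ∧
      (ρ'' ^ 3 + ((a : ℝ) - 1) * ρ'' ^ 2 - (a : ℝ) * ρ'' - 1 = 0 ∧
        -(a : ℝ) + 1 / ((a : ℝ) ^ 2 + (a : ℝ)) < ρ'' ∧ ρ'' < -(a : ℝ) + 1 / ((a : ℝ) ^ 2)) := by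
  set b : ℝ := (a : ℝ) with hb
  have hb3 : (3 : ℝ) ≤ b := by rw [hb]; exact_mod_cast ha
  have h0 : (0 : ℝ) < b := by linarith
  have hne : b ≠ 0 := ne_of_gt h0
  have hne1 : b + 1 ≠ 0 := by positivity
  have hne2 : b + 2 ≠ 0 := by positivity
  have hne3 : b + 3 ≠ 0 := by positivity
  -- first root
  obtain ⟨ρ, hρ, hρ1, hρ2⟩ := ennola_aux b (1 + 1 / (b + 3)) (1 + 1 / (b + 2))
    (by gcongr <;> linarith)
    (by
      have h : (1 + 1 / (b + 3)) ^ 3 + (b - 1) * (1 + 1 / (b + 3)) ^ 2 - b * (1 + 1 / (b + 3)) - 1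
          = (-(b ^ 2 + 7 * b + 11)) / (b + 3) ^ 3 := by field_simp; ring
      rw [h]
      apply div_neg_of_neg_of_pos
      · nlinarith
      · positivity)
    (by
      have h : (1 + 1 / (b + 2)) ^ 3 + (b - 1) * (1 + 1 / (b + 2)) ^ 2 - b * (1 + 1 / (b + 2)) - 1
          = 1 / (b + 2) ^ 3 := by field_simp; ring
      rw [h]; positivity)
  -- second root
  obtain ⟨ρ', hρ', hρ'1, hρ'2⟩ := ennola_aux' b (-(1 / b)) (-(1 / (b + 1)))
    (by
      rw [neg_le_neg_iff]
      gcongr <;> linarith)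
    (by
      have h : (-(1 / b)) ^ 3 + (b - 1) * (-(1 / b)) ^ 2 - b * (-(1 / b)) - 1
          = (b ^ 2 - b - 1) / b ^ 3 := by field_simp; ring
      rw [h]
      apply div_pos
      · nlinarith
      · positivity)
    (by
      have h : (-(1 / (b + 1))) ^ 3 + (b - 1) * (-(1 / (b + 1))) ^ 2 - b * (-(1 / (b + 1))) - 1
          = (-(2 * b + 3)) / (b + 1) ^ 3 := by field_simp; ring
      rw [h]
      apply div_neg_of_neg_of_pos
      · nlinarith
      · positivity)
  -- third root
  obtain ⟨ρ'', hρ'', hρ''1, hρ''2⟩ := ennola_aux b (-b + 1 / (b ^ 2 + b)) (-b + 1 / b ^ 2)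
    (by
      have hx : (1:ℝ)/(b^2+b) ≤ 1/b^2 := by
        apply one_div_le_one_div_of_le (by positivity)
        nlinarith
      linarith)
    (by
      have hq : b ^ 2 + b ≠ 0 := by positivity
      have h : (-b + 1 / (b ^ 2 + b)) ^ 3 + (b - 1) * (-b + 1 / (b ^ 2 + b)) ^ 2
          - b * (-b + 1 / (b ^ 2 + b)) - 1
          = (-(2 * b ^ 3 + 3 * b ^ 2 + b - 1)) / (b ^ 2 + b) ^ 3 := by field_simp; ring
      rw [h]
      apply div_neg_of_neg_of_pos
      · nlinarith
      · positivity)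
    (by
      have h : (-b + 1 / b ^ 2) ^ 3 + (b - 1) * (-b + 1 / b ^ 2) ^ 2 - b * (-b + 1 / b ^ 2) - 1
          = (b ^ 5 - 2 * b ^ 3 - b ^ 2 + 1) / b ^ 6 := by field_simp; ring
      rw [h]
      apply div_pos
      · have h1 : 2 * b + 1 < b ^ 3 := by nlinarith
        nlinarith [mul_pos (by positivity : (0:ℝ) < b ^ 2) (by linarith : 0 < b ^ 3 - 2 * b - 1)]
      · positivity)
  exact ⟨ρ, ρ', ρ'', ⟨hρ, hρ1, hρ2⟩, ⟨hρ', hρ'1, hρ'2⟩, ⟨hρ'', hρ''1, hρ''2⟩⟩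
end

section
/- Let a ≥ 5 be an integer. Then the polynomial g(x) = x^3 - (a-1)x^2 - a x - 1 has three real roots ψ, ψ', ψ'' satisfying a + (a-1)/a³ < ψ < a + (a²-1)/a⁴, -(a-1)/a < ψ' < -(a-2)/(a-1), and -1/(a-2) < ψ'' < -1/(a-1). -/
set_option maxHeartbeats 1000000

lemma ennola_ivt_up (A lo hi : ℝ) (hle : lo ≤ hi)
    (h1 : lo ^ 3 - (A - 1) * lo ^ 2 - A * lo - 1 < 0)
    (h2 : 0 < hi ^ 3 - (A - 1) * hi ^ 2 - A * hi - 1) :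
    ∃ x : ℝ, x ^ 3 - (A - 1) * x ^ 2 - A * x - 1 = 0 ∧ lo < x ∧ x < hi := by
  have hc : ContinuousOn (fun x : ℝ => x ^ 3 - (A - 1) * x ^ 2 - A * x - 1)
      (Set.Icc lo hi) := by fun_prop
  obtain ⟨x, hx, hfx⟩ := intermediate_value_Ioo hle hc ⟨h1, h2⟩
  exact ⟨x, hfx, hx.1, hx.2⟩

lemma ennola_ivt_down (A lo hi : ℝ) (hle : lo ≤ hi)
    (h1 : 0 < lo ^ 3 - (A - 1) * lo ^ 2 - A * lo - 1)
    (h2 : hi ^ 3 - (A - 1) * hi ^ 2 - A * hi - 1 < 0) :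
    ∃ x : ℝ, x ^ 3 - (A - 1) * x ^ 2 - A * x - 1 = 0 ∧ lo < x ∧ x < hi := by
  have hc : ContinuousOn (fun x : ℝ => x ^ 3 - (A - 1) * x ^ 2 - A * x - 1)
      (Set.Icc lo hi) := by fun_prop
  obtain ⟨x, hx, hfx⟩ := intermediate_value_Ioo' hle hc ⟨h2, h1⟩
  exact ⟨x, hfx, hx.1, hx.2⟩

theorem ennola_second_poly_roots (a : ℤ) (ha : 5 ≤ a) :
    ∃ ψ ψ' ψ'' : ℝ,
      (ψ ^ 3 - ((a : ℝ) - 1) * ψ ^ 2 - (a : ℝ) * ψ - 1 = 0 ∧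
        (a : ℝ) + ((a : ℝ) - 1) / (a : ℝ) ^ 3 < ψ ∧ ψ < (a : ℝ) + ((a : ℝ) ^ 2 - 1) / (a : ℝ) ^ 4) ∧
      (ψ' ^ 3 - ((a : ℝ) - 1) * ψ' ^ 2 - (a : ℝ) * ψ' - 1 = 0 ∧
        -(((a : ℝ) - 1) / (a : ℝ)) < ψ' ∧ ψ' < -(((a : ℝ) - 2) / ((a : ℝ) - 1))) ∧
      (ψ'' ^ 3 - ((a : ℝ) - 1) * ψ'' ^ 2 - (a : ℝ) * ψ'' - 1 = 0 ∧
        -(1 / ((a : ℝ) - 2)) < ψ'' ∧ ψ'' < -(1 / ((a : ℝ) - 1))) := by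
  have hA : (5 : ℝ) ≤ (a : ℝ) := by exact_mod_cast ha
  set A : ℝ := (a : ℝ) with hAdef
  have hA0 : (0 : ℝ) < A := by linarith
  have hA0' : A ≠ 0 := ne_of_gt hA0
  have hA1 : A - 1 ≠ 0 := by intro h; nlinarith
  have hA2 : A - 2 ≠ 0 := by intro h; nlinarith
  -- first root: interval (A + (A-1)/A^3, A + (A^2-1)/A^4)
  have hle1 : A + (A - 1) / A ^ 3 ≤ A + (A ^ 2 - 1) / A ^ 4 := by
    have : (A - 1) / A ^ 3 ≤ (A ^ 2 - 1) / A ^ 4 := by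
      rw [div_le_div_iff₀ (by positivity) (by positivity)]
      nlinarith [pow_pos hA0 3, pow_pos hA0 4]
    linarith
  have hlo1 : (A + (A - 1) / A ^ 3) ^ 3 - (A - 1) * (A + (A - 1) / A ^ 3) ^ 2
      - A * (A + (A - 1) / A ^ 3) - 1 < 0 := by
    have h9 : (0 : ℝ) < A ^ 9 := by positivity
    have key : ((A + (A - 1) / A ^ 3) ^ 3 - (A - 1) * (A + (A - 1) / A ^ 3) ^ 2
        - A * (A + (A - 1) / A ^ 3) - 1) * A ^ 9
        = -A^7 + 2*A^6 - 3*A^5 + 2*A^3 - 3*A^2 + 3*A - 1 := by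
      field_simp; ring
    have hP : -A^7 + 2*A^6 - 3*A^5 + 2*A^3 - 3*A^2 + 3*A - 1 < 0 := by
      nlinarith [pow_pos hA0 5, pow_pos hA0 3, pow_pos hA0 2,
        mul_nonneg (pow_pos hA0 6).le (by linarith : (0:ℝ) ≤ A - 5),
        mul_nonneg (pow_pos hA0 5).le (by linarith : (0:ℝ) ≤ A - 5)]
    nlinarith [key, hP, h9]
  have hhi1 : 0 < (A + (A ^ 2 - 1) / A ^ 4) ^ 3 - (A - 1) * (A + (A ^ 2 - 1) / A ^ 4) ^ 2
      - A * (A + (A ^ 2 - 1) / A ^ 4) - 1 := by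
    have h12 : (0 : ℝ) < A ^ 12 := by positivity
    have key : ((A + (A ^ 2 - 1) / A ^ 4) ^ 3 - (A - 1) * (A + (A ^ 2 - 1) / A ^ 4) ^ 2
        - A * (A + (A ^ 2 - 1) / A ^ 4) - 1) * A ^ 12
        = A^11 - A^10 + A^9 + A^8 - 4*A^7 - A^6 + 2*A^5 - 2*A^4 + 3*A^2 - 1 := by
      field_simp; ring
    have hP : 0 < A^11 - A^10 + A^9 + A^8 - 4*A^7 - A^6 + 2*A^5 - 2*A^4 + 3*A^2 - 1 := by
      nlinarith [pow_pos hA0 9, pow_pos hA0 5, pow_pos hA0 2,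
        mul_nonneg (pow_pos hA0 10).le (by linarith : (0:ℝ) ≤ A - 5),
        mul_nonneg (pow_pos hA0 7).le (by linarith : (0:ℝ) ≤ A - 5),
        mul_nonneg (pow_pos hA0 6).le (by linarith : (0:ℝ) ≤ A - 5),
        mul_nonneg (pow_pos hA0 4).le (by linarith : (0:ℝ) ≤ A - 5)]
    nlinarith [key, hP, h12]
  obtain ⟨ψ, hψ0, hψ1, hψ2⟩ := ennola_ivt_up A _ _ hle1 hlo1 hhi1
  -- second root: interval (-(A-1)/A, -(A-2)/(A-1))
  have hle2 : -((A - 1) / A) ≤ -((A - 2) / (A - 1)) := by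
    rw [neg_le_neg_iff, div_le_div_iff₀ (by linarith) hA0]
    nlinarith
  have hlo2 : (-((A - 1) / A)) ^ 3 - (A - 1) * (-((A - 1) / A)) ^ 2
      - A * (-((A - 1) / A)) - 1 < 0 := by
    have h3 : (0 : ℝ) < A ^ 3 := by positivity
    have key : ((-((A - 1) / A)) ^ 3 - (A - 1) * (-((A - 1) / A)) ^ 2
        - A * (-((A - 1) / A)) - 1) * A ^ 3 = 1 - 2*A := by
      field_simp; ring
    have hP : 1 - 2*A < 0 := by linarith
    nlinarith [key, hP, h3]
  have hhi2 : 0 < (-((A - 2) / (A - 1))) ^ 3 - (A - 1) * (-((A - 2) / (A - 1))) ^ 2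
      - A * (-((A - 2) / (A - 1))) - 1 := by
    have h3 : (0 : ℝ) < (A - 1) ^ 3 := pow_pos (by linarith) 3
    have key : ((-((A - 2) / (A - 1))) ^ 3 - (A - 1) * (-((A - 2) / (A - 1))) ^ 2
        - A * (-((A - 2) / (A - 1))) - 1) * (A - 1) ^ 3 = A^2 - 5*A + 5 := by
      field_simp; ring
    have hP : 0 < A^2 - 5*A + 5 := by nlinarith
    nlinarith [key, hP, h3]
  obtain ⟨ψ', hψ'0, hψ'1, hψ'2⟩ := ennola_ivt_up A _ _ hle2 hlo2 hhi2
  -- third root: interval (-1/(A-2), -1/(A-1))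
  have hle3 : -(1 / (A - 2)) ≤ -(1 / (A - 1)) := by
    rw [neg_le_neg_iff, div_le_div_iff₀ (by linarith) (by linarith)]
    linarith
  have hlo3 : 0 < (-(1 / (A - 2))) ^ 3 - (A - 1) * (-(1 / (A - 2))) ^ 2
      - A * (-(1 / (A - 2))) - 1 := by
    have h3 : (0 : ℝ) < (A - 2) ^ 3 := pow_pos (by linarith) 3
    have key : ((-(1 / (A - 2))) ^ 3 - (A - 1) * (-(1 / (A - 2))) ^ 2
        - A * (-(1 / (A - 2))) - 1) * (A - 2) ^ 3 = A^2 - 5*A + 5 := by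
      field_simp; ring
    have hP : 0 < A^2 - 5*A + 5 := by nlinarith
    nlinarith [key, hP, h3]
  have hhi3 : (-(1 / (A - 1))) ^ 3 - (A - 1) * (-(1 / (A - 1))) ^ 2
      - A * (-(1 / (A - 1))) - 1 < 0 := by
    have h3 : (0 : ℝ) < (A - 1) ^ 3 := pow_pos (by linarith) 3
    have key : ((-(1 / (A - 1))) ^ 3 - (A - 1) * (-(1 / (A - 1))) ^ 2
        - A * (-(1 / (A - 1))) - 1) * (A - 1) ^ 3 = -1 := by
      field_simp; ring
    nlinarith [key, h3]
  obtain ⟨ψ'', hψ''0, hψ''1, hψ''2⟩ := ennola_ivt_down A _ _ hle3 hlo3 hhi3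
  exact ⟨ψ, ψ', ψ'', ⟨hψ0, hψ1, hψ2⟩, ⟨hψ'0, hψ'1, hψ'2⟩, ⟨hψ''0, hψ''1, hψ''2⟩⟩
end

section
/- Let a ≥ 3 be an integer and ρ a root of f(x) = x^3 + (a-1)x^2 - a x - 1. In the order Z[ρ], let δ = (ρ + a)/f'(ρ), an element of the codifferent. Then for any α = v₁ + v₂ρ + v₃ρ² with v₁, v₂, v₃ ∈ Z, the trace Tr(αδ) over Q equals v₂ + v₃. -/
lemma lag (c₀ c₁ c₂ ρ₁ ρ₂ ρ₃ : ℝ)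
    (h12 : ρ₁ ≠ ρ₂) (h13 : ρ₁ ≠ ρ₃) (h23 : ρ₂ ≠ ρ₃) :
    (c₀ + c₁ * ρ₁ + c₂ * ρ₁ ^ 2) / ((ρ₁ - ρ₂) * (ρ₁ - ρ₃))
      + (c₀ + c₁ * ρ₂ + c₂ * ρ₂ ^ 2) / ((ρ₂ - ρ₁) * (ρ₂ - ρ₃))
      + (c₀ + c₁ * ρ₃ + c₂ * ρ₃ ^ 2) / ((ρ₃ - ρ₁) * (ρ₃ - ρ₂)) = c₂ := by
  have d12 : ρ₁ - ρ₂ ≠ 0 := sub_ne_zero.mpr h12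
  have d13 : ρ₁ - ρ₃ ≠ 0 := sub_ne_zero.mpr h13
  have d23 : ρ₂ - ρ₃ ≠ 0 := sub_ne_zero.mpr h23
  have d21 : ρ₂ - ρ₁ ≠ 0 := sub_ne_zero.mpr h12.symm
  have d31 : ρ₃ - ρ₁ ≠ 0 := sub_ne_zero.mpr h13.symm
  have d32 : ρ₃ - ρ₂ ≠ 0 := sub_ne_zero.mpr h23.symm
  field_simp
  ring

theorem trace_codifferent_rho_plus_a (a v₁ v₂ v₃ : ℤ) (ha : 3 ≤ a)
    (ρ₁ ρ₂ ρ₃ : ℝ)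
    (hfac : ∀ x : ℝ, x ^ 3 + ((a : ℝ) - 1) * x ^ 2 - (a : ℝ) * x - 1
      = (x - ρ₁) * (x - ρ₂) * (x - ρ₃))
    (h12 : ρ₁ ≠ ρ₂) (h13 : ρ₁ ≠ ρ₃) (h23 : ρ₂ ≠ ρ₃) :
    ((v₁ : ℝ) + (v₂ : ℝ) * ρ₁ + (v₃ : ℝ) * ρ₁ ^ 2) * (ρ₁ + (a : ℝ))
        / (3 * ρ₁ ^ 2 + 2 * ((a : ℝ) - 1) * ρ₁ - (a : ℝ))
      + ((v₁ : ℝ) + (v₂ : ℝ) * ρ₂ + (v₃ : ℝ) * ρ₂ ^ 2) * (ρ₂ + (a : ℝ))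
        / (3 * ρ₂ ^ 2 + 2 * ((a : ℝ) - 1) * ρ₂ - (a : ℝ))
      + ((v₁ : ℝ) + (v₂ : ℝ) * ρ₃ + (v₃ : ℝ) * ρ₃ ^ 2) * (ρ₃ + (a : ℝ))
        / (3 * ρ₃ ^ 2 + 2 * ((a : ℝ) - 1) * ρ₃ - (a : ℝ))
      = (v₂ : ℝ) + (v₃ : ℝ) := by
  have h0 := hfac 0
  have h1 := hfac 1
  have hm := hfac (-1)
  have he1 : ρ₁ + ρ₂ + ρ₃ = 1 - (a : ℝ) := by linear_combination h1 / 2 + hm / 2 - h0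
  have he2 : ρ₁ * ρ₂ + ρ₁ * ρ₃ + ρ₂ * ρ₃ = -(a : ℝ) := by linear_combination -h1 / 2 + hm / 2
  have hf1 : ρ₁ ^ 3 + ((a : ℝ) - 1) * ρ₁ ^ 2 - (a : ℝ) * ρ₁ - 1 = 0 := by
    have h := hfac ρ₁; rw [h]; ring
  have hf2 : ρ₂ ^ 3 + ((a : ℝ) - 1) * ρ₂ ^ 2 - (a : ℝ) * ρ₂ - 1 = 0 := by
    have h := hfac ρ₂; rw [h]; ring
  have hf3 : ρ₃ ^ 3 + ((a : ℝ) - 1) * ρ₃ ^ 2 - (a : ℝ) * ρ₃ - 1 = 0 := by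
    have h := hfac ρ₃; rw [h]; ring
  have den1 : 3 * ρ₁ ^ 2 + 2 * ((a : ℝ) - 1) * ρ₁ - (a : ℝ) = (ρ₁ - ρ₂) * (ρ₁ - ρ₃) := by
    linear_combination 2 * ρ₁ * he1 - he2
  have den2 : 3 * ρ₂ ^ 2 + 2 * ((a : ℝ) - 1) * ρ₂ - (a : ℝ) = (ρ₂ - ρ₁) * (ρ₂ - ρ₃) := by
    linear_combination 2 * ρ₂ * he1 - he2
  have den3 : 3 * ρ₃ ^ 2 + 2 * ((a : ℝ) - 1) * ρ₃ - (a : ℝ) = (ρ₃ - ρ₁) * (ρ₃ - ρ₂) := by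
    linear_combination 2 * ρ₃ * he1 - he2
  have num1 : ((v₁ : ℝ) + (v₂ : ℝ) * ρ₁ + (v₃ : ℝ) * ρ₁ ^ 2) * (ρ₁ + (a : ℝ))
      = ((a : ℝ) * v₁ + v₃) + ((v₁ : ℝ) + (a : ℝ) * v₂ + (a : ℝ) * v₃) * ρ₁
        + ((v₂ : ℝ) + v₃) * ρ₁ ^ 2 := by linear_combination (v₃ : ℝ) * hf1
  have num2 : ((v₁ : ℝ) + (v₂ : ℝ) * ρ₂ + (v₃ : ℝ) * ρ₂ ^ 2) * (ρ₂ + (a : ℝ))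
      = ((a : ℝ) * v₁ + v₃) + ((v₁ : ℝ) + (a : ℝ) * v₂ + (a : ℝ) * v₃) * ρ₂
        + ((v₂ : ℝ) + v₃) * ρ₂ ^ 2 := by linear_combination (v₃ : ℝ) * hf2
  have num3 : ((v₁ : ℝ) + (v₂ : ℝ) * ρ₃ + (v₃ : ℝ) * ρ₃ ^ 2) * (ρ₃ + (a : ℝ))
      = ((a : ℝ) * v₁ + v₃) + ((v₁ : ℝ) + (a : ℝ) * v₂ + (a : ℝ) * v₃) * ρ₃
        + ((v₂ : ℝ) + v₃) * ρ₃ ^ 2 := by linear_combination (v₃ : ℝ) * hf3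
  rw [num1, num2, num3, den1, den2, den3]
  exact lag _ _ _ _ _ _ h12 h13 h23
end

section
/- Let a ≥ 3 be an integer, ρ the root of x³ + (a-1)x² - ax - 1 with 1 < ρ < 2, and ρ' the root with -1 < ρ' < 0. Suppose ε = ±ρ^k(ρ-1)^l with k, l ∈ Z satisfies |ε| < a, |ε'| < a, and |ε''| < a, where ε', ε'' are the corresponding products in the other two roots. Then ε ∈ {1, -1, ρ, -ρ}. -/
set_option maxHeartbeats 1000000

lemma abs_zpow' (x : ℝ) (n : ℤ) : |x ^ n| = |x| ^ n := by
  cases n with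
  | ofNat m => simpa using abs_pow x m
  | negSucc m => simp [zpow_negSucc, abs_inv, abs_pow]

lemma aux_pq {A p q : ℝ} (hA : 3 ≤ A) (hp : p * (A+2) < A+3) (hq : q * (A+2) < 1)
    (hq0 : 0 < q) (hp1 : 1 < p) : A * (p * q) < 1 := by
  have hA2 : (0:ℝ) < A + 2 := by linarith
  have m1 : (p*(A+2)) * (q*(A+2)) < (A+3) * 1 :=
    mul_lt_mul'' hp hq (by positivity) (by positivity)
  nlinarith [m1, mul_pos hA2 hA2]

lemma aux_bc {A b c : ℝ} (hA : 3 ≤ A) (hb : b * A < 1) (hc : c * A < A + 1)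
    (hb0 : 0 < b) (hc0 : 0 < c) : b * c ≤ 1 := by
  have hA0 : (0:ℝ) < A := by linarith
  have m2 : (b*A) * (c*A) < 1 * (A+1) :=
    mul_lt_mul'' hb hc (by positivity) (by positivity)
  nlinarith [m2, mul_pos hA0 hA0]

lemma aux_sq {A x : ℝ} (hA : 3 ≤ A) (h : A - 1/9 < x) : A < x * x := by
  nlinarith [mul_lt_mul'' h h (by linarith) (by linarith)]

theorem small_units (a : ℤ) (ha : 3 ≤ a) (ρ ρ' ρ'' : ℝ)
    (hρ : ρ ^ 3 + ((a : ℝ) - 1) * ρ ^ 2 - (a : ℝ) * ρ - 1 = 0)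
    (hρ1 : 1 + 1 / ((a : ℝ) + 3) < ρ) (hρ2 : ρ < 1 + 1 / ((a : ℝ) + 2))
    (hρ' : ρ' ^ 3 + ((a : ℝ) - 1) * ρ' ^ 2 - (a : ℝ) * ρ' - 1 = 0)
    (hρ'1 : -(1 / (a : ℝ)) < ρ') (hρ'2 : ρ' < -(1 / ((a : ℝ) + 1)))
    (hρ'' : ρ'' ^ 3 + ((a : ℝ) - 1) * ρ'' ^ 2 - (a : ℝ) * ρ'' - 1 = 0)
    (hρ''1 : -(a : ℝ) + 1 / ((a : ℝ) ^ 2 + (a : ℝ)) < ρ'')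
    (hρ''2 : ρ'' < -(a : ℝ) + 1 / ((a : ℝ) ^ 2))
    (k l : ℤ) (s : ℝ) (hs : s = 1 ∨ s = -1)
    (h1 : |s * ρ ^ k * (ρ - 1) ^ l| < (a : ℝ))
    (h2 : |s * ρ' ^ k * (ρ' - 1) ^ l| < (a : ℝ))
    (h3 : |s * ρ'' ^ k * (ρ'' - 1) ^ l| < (a : ℝ)) :
    s * ρ ^ k * (ρ - 1) ^ l = 1 ∨ s * ρ ^ k * (ρ - 1) ^ l = -1 ∨
      s * ρ ^ k * (ρ - 1) ^ l = ρ ∨ s * ρ ^ k * (ρ - 1) ^ l = -ρ := by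
  have haR : (3:ℝ) ≤ (a:ℝ) := by exact_mod_cast ha
  have hA0 : (0:ℝ) < (a:ℝ) := by linarith
  have hA2 : (0:ℝ) < (a:ℝ) + 2 := by linarith
  have hA3 : (0:ℝ) < (a:ℝ) + 3 := by linarith
  have hA1 : (0:ℝ) < (a:ℝ) + 1 := by linarith
  -- basic bounds on the six positive quantities
  have hP1a : 1 < ρ := by
    have : 0 < 1 / ((a:ℝ) + 3) := by positivity
    linarith
  have hQ1pos : 0 < ρ - 1 := by linarith
  have hQ1A : (ρ - 1) * ((a:ℝ) + 2) < 1 := by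
    have h : ρ - 1 < 1 / ((a:ℝ) + 2) := by linarith
    exact (lt_div_iff₀ hA2).mp h
  have hP1A : ρ * ((a:ℝ) + 2) < (a:ℝ) + 3 := by nlinarith [hQ1A]
  -- ρ' : P2 = -ρ' ∈ (1/(a+1), 1/a), Q2 = -(ρ'-1) = 1-ρ' ∈ (1+1/(a+1), 1+1/a)
  have hP2pos : 0 < -ρ' := by
    have h0 : 0 < 1 / ((a:ℝ) + 1) := by positivity
    linarith
  have hP2A : (-ρ') * (a:ℝ) < 1 := by
    have : -ρ' < 1 / (a:ℝ) := by linarith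
    exact (lt_div_iff₀ hA0).mp this
  have hQ2a : 1 ≤ -(ρ' - 1) := by linarith
  have hQ2A : (-(ρ' - 1)) * (a:ℝ) < (a:ℝ) + 1 := by nlinarith [hP2A]
  -- ρ'' : P3 = -ρ'' ∈ (a - 1/a², a), Q3 = 1-ρ'' > a+1-1/a² > a
  have hiA2 : 1 / ((a:ℝ)^2) ≤ 1 / 9 := by
    rw [div_le_div_iff₀ (by nlinarith : (0:ℝ) < (a:ℝ)^2) (by norm_num : (0:ℝ) < 9)]
    nlinarith
  have hP3b : (a:ℝ) - 1/9 < -ρ'' := by linarith [hρ''2, hiA2]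
  have hP3a : 1 ≤ -ρ'' := by linarith
  have hQ3 : (a:ℝ) < -(ρ'' - 1) := by linarith
  -- products < 1 (scaled)
  have hP1Q1 : (a:ℝ) * (ρ * (ρ - 1)) < 1 := aux_pq haR hP1A hQ1A hQ1pos hP1a
  have hP2Q2 : (-ρ') * (-(ρ' - 1)) ≤ 1 := aux_bc haR hP2A hQ2A hP2pos (by linarith)
  -- convert hypotheses to positive forms
  have habs : |s| = 1 := by rcases hs with rfl | rfl <;> norm_num
  have F1 : ρ ^ k * (ρ - 1) ^ l < (a:ℝ) := by
    have h := h1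
    rwa [abs_mul, abs_mul, habs, one_mul, abs_zpow', abs_zpow',
      abs_of_pos (by linarith : (0:ℝ) < ρ), abs_of_pos hQ1pos] at h
  have F2 : (-ρ') ^ k * (-(ρ' - 1)) ^ l < (a:ℝ) := by
    have h := h2
    rwa [abs_mul, abs_mul, habs, one_mul, abs_zpow', abs_zpow',
      abs_of_neg (by linarith : ρ' < 0), abs_of_neg (by linarith : ρ' - 1 < 0)] at h
  have F3 : (-ρ'') ^ k * (-(ρ'' - 1)) ^ l < (a:ℝ) := by
    have h := h3
    rwa [abs_mul, abs_mul, habs, one_mul, abs_zpow', abs_zpow',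
      abs_of_neg (by linarith : ρ'' < 0), abs_of_neg (by linarith : ρ'' - 1 < 0)] at h
  -- inverse-base rewriting helper facts
  have hP1pos : (0:ℝ) < ρ := by linarith
  have hQ3pos : (0:ℝ) < -(ρ'' - 1) := by linarith
  have hP3pos : (0:ℝ) < -ρ'' := by linarith
  have hQ2pos : (0:ℝ) < -(ρ' - 1) := by linarith
  -- key inverse bounds
  have hinvP2 : (a:ℝ) < (-ρ')⁻¹ := by
    rw [← one_div, lt_div_iff₀ hP2pos]; linarith [hP2A]
  have hinvQ1 : (a:ℝ) < (ρ - 1)⁻¹ := by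
    rw [← one_div, lt_div_iff₀ hQ1pos]; nlinarith [hQ1A, hQ1pos]
  have hinvP1Q1 : (a:ℝ) < (ρ * (ρ - 1))⁻¹ := by
    rw [← one_div, lt_div_iff₀ (by positivity : (0:ℝ) < ρ * (ρ - 1))]; linarith [hP1Q1]
  have hinvP2Q2 : 1 ≤ ((-ρ') * (-(ρ' - 1)))⁻¹ := by
    rw [← one_div, le_div_iff₀ (by positivity : (0:ℝ) < (-ρ') * (-(ρ' - 1)))]; linarith [hP2Q2]
  have hinvQ1one : 1 ≤ (ρ - 1)⁻¹ := by linarith [hinvQ1]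
  have hinvP2one : 1 ≤ (-ρ')⁻¹ := by linarith
  have hinvP1Q1one : 1 ≤ (ρ * (ρ - 1))⁻¹ := by linarith
  -- generic zpow rewrite: x ^ n = (x⁻¹) ^ (-n)
  have zrw : ∀ (x : ℝ) (n : ℤ), x ^ n = (x⁻¹) ^ (-n) := by
    intro x n; rw [zpow_neg, inv_zpow, inv_inv]
  rcases lt_trichotomy l 0 with hl | rfl | hl
  · -- l ≤ -1
    rcases le_or_gt 0 k with hk | hk
    · -- case 2a: F1 ≥ Q1⁻¹ > a
      exfalso
      have t1 : 1 ≤ ρ ^ k := one_le_zpow₀ hP1a.le hk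
      have t2 : (ρ - 1)⁻¹ ≤ (ρ - 1) ^ l := by
        rw [zrw (ρ-1) l]
        calc (ρ - 1)⁻¹ = ((ρ-1)⁻¹) ^ (1:ℤ) := (zpow_one _).symm
        _ ≤ ((ρ-1)⁻¹) ^ (-l) := zpow_le_zpow_right₀ hinvQ1one (by omega)
      have : (ρ - 1)⁻¹ ≤ ρ ^ k * (ρ - 1) ^ l := by
        calc (ρ - 1)⁻¹ = 1 * (ρ - 1)⁻¹ := (one_mul _).symm
        _ ≤ ρ ^ k * (ρ - 1) ^ l := by
            apply mul_le_mul t1 t2 (by positivity) (by positivity)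
      linarith
    · rcases le_or_gt l k with hlk | hlk
      · -- case 2b-i : F1 = (ρ(ρ-1))^k (ρ-1)^(l-k) ≥ (ρ(ρ-1))⁻¹ > a
        exfalso
        have hsplit : ρ ^ k * (ρ - 1) ^ l = (ρ * (ρ - 1)) ^ k * (ρ - 1) ^ (l - k) := by
          rw [mul_zpow, mul_assoc, ← zpow_add₀ (ne_of_gt hQ1pos),
            show k + (l - k) = l from by omega]
        have t1 : (ρ * (ρ - 1))⁻¹ ≤ (ρ * (ρ - 1)) ^ k := by
          rw [zrw (ρ * (ρ-1)) k]
          calc (ρ * (ρ - 1))⁻¹ = ((ρ * (ρ-1))⁻¹) ^ (1:ℤ) := (zpow_one _).symm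
          _ ≤ _ := zpow_le_zpow_right₀ hinvP1Q1one (by omega)
        have t2 : 1 ≤ (ρ - 1) ^ (l - k) := by
          rw [zrw (ρ-1) (l-k)]
          exact one_le_zpow₀ hinvQ1one (by omega)
        have : (ρ * (ρ - 1))⁻¹ ≤ ρ ^ k * (ρ - 1) ^ l := by
          rw [hsplit]
          calc (ρ * (ρ - 1))⁻¹ = (ρ * (ρ - 1))⁻¹ * 1 := (mul_one _).symm
          _ ≤ _ := by
              apply mul_le_mul t1 t2 (by norm_num) (by positivity)
        linarith
      · -- case 2b-ii : F2 = (P2 Q2)^l * P2^(k-l) ≥ P2⁻¹ > a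
        exfalso
        have hsplit : (-ρ') ^ k * (-(ρ' - 1)) ^ l
            = ((-ρ') * (-(ρ' - 1))) ^ l * (-ρ') ^ (k - l) := by
          rw [mul_zpow]
          rw [show (-ρ') ^ k = (-ρ') ^ l * (-ρ') ^ (k - l) by
            rw [← zpow_add₀ (ne_of_gt hP2pos), show l + (k - l) = k from by omega]]
          ring
        have t1 : 1 ≤ ((-ρ') * (-(ρ' - 1))) ^ l := by
          rw [zrw _ l]
          exact one_le_zpow₀ hinvP2Q2 (by omega)
        have t2 : (-ρ')⁻¹ ≤ (-ρ') ^ (k - l) := by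
          rw [zrw _ (k-l)]
          calc (-ρ')⁻¹ = ((-ρ')⁻¹) ^ (1:ℤ) := (zpow_one _).symm
          _ ≤ _ := zpow_le_zpow_right₀ hinvP2one (by omega)
        have : (-ρ')⁻¹ ≤ (-ρ') ^ k * (-(ρ' - 1)) ^ l := by
          rw [hsplit]
          calc (-ρ')⁻¹ = 1 * (-ρ')⁻¹ := (one_mul _).symm
          _ ≤ _ := by
              apply mul_le_mul t1 t2 (by positivity) (by positivity)
        linarith
  · -- l = 0
    rcases lt_trichotomy k 0 with hk | rfl | hk
    · -- 3b : F2 = P2^k ≥ P2⁻¹ > a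
      exfalso
      have t2 : (-ρ')⁻¹ ≤ (-ρ') ^ k := by
        rw [zrw _ k]
        calc (-ρ')⁻¹ = ((-ρ')⁻¹) ^ (1:ℤ) := (zpow_one _).symm
        _ ≤ _ := zpow_le_zpow_right₀ hinvP2one (by omega)
      rw [zpow_zero, mul_one] at F2
      linarith
    · -- k = 0 : ε = s
      rw [zpow_zero, zpow_zero, mul_one, mul_one]
      rcases hs with rfl | rfl
      · exact Or.inl rfl
      · exact Or.inr (Or.inl rfl)
    · rcases eq_or_lt_of_le (by omega : (1:ℤ) ≤ k) with rfl | hk2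
      · -- k = 1
        rw [zpow_one, zpow_zero, mul_one]
        rcases hs with rfl | rfl
        · exact Or.inr (Or.inr (Or.inl (one_mul ρ)))
        · refine Or.inr (Or.inr (Or.inr ?_)); ring
      · -- k ≥ 2 : F3 = P3^k ≥ P3² > a
        exfalso
        have t : (-ρ'') ^ (2:ℤ) ≤ (-ρ'') ^ k := zpow_le_zpow_right₀ hP3a (by omega)
        rw [zpow_zero, mul_one] at F3
        have hsq : (a:ℝ) < (-ρ'') ^ (2:ℤ) := by
          rw [zpow_two]
          exact aux_sq haR hP3b
        linarith
  · -- l ≥ 1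
    rcases le_or_gt 0 k with hk | hk
    · -- 1a : F3 ≥ Q3 > a
      exfalso
      have t1 : 1 ≤ (-ρ'') ^ k := one_le_zpow₀ hP3a hk
      have t2 : -(ρ'' - 1) ≤ (-(ρ'' - 1)) ^ l := by
        calc -(ρ'' - 1) = (-(ρ'' - 1)) ^ (1:ℤ) := (zpow_one _).symm
        _ ≤ _ := zpow_le_zpow_right₀ (by linarith : 1 ≤ -(ρ''-1)) (by omega)
      have : -(ρ'' - 1) ≤ (-ρ'') ^ k * (-(ρ'' - 1)) ^ l := by
        calc -(ρ'' - 1) = 1 * (-(ρ'' - 1)) := (one_mul _).symm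
        _ ≤ _ := by apply mul_le_mul t1 t2 (by linarith) (by positivity)
      linarith
    · -- 1b : F2 ≥ P2⁻¹ > a
      exfalso
      have t1 : (-ρ')⁻¹ ≤ (-ρ') ^ k := by
        rw [zrw _ k]
        calc (-ρ')⁻¹ = ((-ρ')⁻¹) ^ (1:ℤ) := (zpow_one _).symm
        _ ≤ _ := zpow_le_zpow_right₀ hinvP2one (by omega)
      have t2 : 1 ≤ (-(ρ' - 1)) ^ l := one_le_zpow₀ hQ2a (by omega)
      have : (-ρ')⁻¹ ≤ (-ρ') ^ k * (-(ρ' - 1)) ^ l := by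
        calc (-ρ')⁻¹ = (-ρ')⁻¹ * 1 := (mul_one _).symm
        _ ≤ _ := by apply mul_le_mul t1 t2 (by norm_num) (by positivity)
      linarith
end

section
/- Let a ≥ 6 be an integer and let ρ, ρ', ρ'' be the three real roots of x³ + (a-1)x² - ax - 1 with 1 < ρ < 2, -1 < ρ' < 0, ρ'' < -(a-1). Set γ evaluated at each root: γ = a² - 3a + 11 - (a² - 5a + 1)x - (a - 5)x². Then γ(ρ) < a², γ(ρ') < a², and γ(ρ'') < a². -/
theorem gamma_lt_a_sq (a : ℤ) (ha : 6 ≤ a) (ρ ρ' ρ'' : ℝ)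
    (hρ : ρ ^ 3 + ((a : ℝ) - 1) * ρ ^ 2 - (a : ℝ) * ρ - 1 = 0)
    (h1 : 1 < ρ) (h2 : ρ < 2)
    (hρ' : ρ' ^ 3 + ((a : ℝ) - 1) * ρ' ^ 2 - (a : ℝ) * ρ' - 1 = 0)
    (h1' : -1 < ρ') (h2' : ρ' < 0)
    (hρ'' : ρ'' ^ 3 + ((a : ℝ) - 1) * ρ'' ^ 2 - (a : ℝ) * ρ'' - 1 = 0)
    (h'' : ρ'' < -((a : ℝ) - 1)) :
    (a : ℝ) ^ 2 - 3 * (a : ℝ) + 11 - ((a : ℝ) ^ 2 - 5 * (a : ℝ) + 1) * ρ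
        - ((a : ℝ) - 5) * ρ ^ 2 < (a : ℝ) ^ 2 ∧
    (a : ℝ) ^ 2 - 3 * (a : ℝ) + 11 - ((a : ℝ) ^ 2 - 5 * (a : ℝ) + 1) * ρ'
        - ((a : ℝ) - 5) * ρ' ^ 2 < (a : ℝ) ^ 2 ∧
    (a : ℝ) ^ 2 - 3 * (a : ℝ) + 11 - ((a : ℝ) ^ 2 - 5 * (a : ℝ) + 1) * ρ''
        - ((a : ℝ) - 5) * ρ'' ^ 2 < (a : ℝ) ^ 2 := by
  have hA : (6:ℝ) ≤ (a:ℝ) := by exact_mod_cast ha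
  refine ⟨?_, ?_, ?_⟩
  · nlinarith [mul_nonneg (by nlinarith : (0:ℝ) ≤ (a:ℝ)^2 - 5*a + 1) (by linarith : (0:ℝ) ≤ ρ - 1),
      mul_nonneg (by nlinarith : (0:ℝ) ≤ (a:ℝ) - 5) (by nlinarith : (0:ℝ) ≤ ρ^2 - 1)]
  · -- key: (a-1)*ρ' > -1
    have hkey : -1 < ((a:ℝ) - 1) * ρ' := by
      nlinarith [hρ', mul_pos (by linarith : (0:ℝ) < 1 - ρ') (by linarith : (0:ℝ) < ρ' + a),
        mul_pos (mul_pos (by linarith : (0:ℝ) < 1 - ρ') (by linarith : (0:ℝ) < ρ' + a)) (by linarith : (0:ℝ) < -ρ')]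
    nlinarith [sq_nonneg ρ', mul_nonneg (by nlinarith : (0:ℝ) ≤ (a:ℝ) - 5) (sq_nonneg ρ'), hkey,
      mul_pos (by linarith : (0:ℝ) < (a:ℝ)-1) (by linarith : (0:ℝ) < -ρ')]
  · have hpos : 0 < ρ'' + (a:ℝ) := by
      nlinarith [hρ'', mul_pos (by nlinarith : (0:ℝ) < -ρ'') (by nlinarith : (0:ℝ) < 1 - ρ'')]
    have hsmall : (a:ℝ) * ((a:ℝ)-1) * (ρ'' + a) ≤ 1 := by
      nlinarith [hρ'', mul_nonneg (by nlinarith [mul_pos (by nlinarith : (0:ℝ) < -ρ'' - (a-1)) (by nlinarith : (0:ℝ) < 1 - ρ'')] : (0:ℝ) ≤ (-ρ'')*(1-ρ'') - a*(a-1)) (le_of_lt hpos)]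
    nlinarith [hpos, hsmall, mul_nonneg (le_of_lt hpos) (by nlinarith : (0:ℝ) ≤ (a:ℝ)^2 - 5*a - 1),
      mul_nonneg (by nlinarith : (0:ℝ) ≤ (a:ℝ) - 5) (sq_nonneg (ρ'' + a))]
end
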